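/- Each map f(z) = ((rρ-1)/(r²-1))·z + ((r²-rρ)/(r²-1))·(1/z̄), with 0 < ρ ≤ 2r/(1+r²) < 1, is injective on the annulus {r < |z| < 1}. -/

import Mathlib

/-!
Since `1 / z̄ = z / |z|²`, the map is radial: `f z = (a + b / |z|²) z` with
`a = (rρ - 1)/(r² - 1) > 0` and `b = (r² - rρ)/(r² - 1)`. It is therefore injective on the annulus
as soon as the radial profile `s ↦ a s + b / s` is positive and strictly increasing on `(r, 1)`.
Both follow from `a r² + b = rρ > 0` and `b ≤ a r²`, the latter being the condition
`ρ ≤ 2r / (1 + r²)`.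
-/

open Set

theorem Complex.one_div_conj_eq (z : ℂ) :
    1 / starRingEnd ℂ z = ((‖z‖ ^ 2)⁻¹ : ℝ) * z := by
  rw [one_div, Complex.inv_def, Complex.conj_conj, Complex.normSq_conj,
    Complex.normSq_eq_norm_sq, mul_comm]

theorem Complex.injOn_ofReal_norm_mul {g : ℝ → ℝ} {S : Set ℝ} (hg : ∀ s ∈ S, 0 < g s)
    (hinj : InjOn (fun s => g s * s) S) :
    InjOn (fun z : ℂ => (g ‖z‖ : ℂ) * z) ((‖·‖) ⁻¹' S) := by
  intro z hz w hw hzw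
  dsimp only at hzw
  have hnorm : g ‖z‖ * ‖z‖ = g ‖w‖ * ‖w‖ := by
    simpa only [norm_mul, Complex.norm_real, Real.norm_eq_abs, abs_of_pos (hg _ hz),
      abs_of_pos (hg _ hw)] using congrArg (‖·‖) hzw
  have hzw_norm : ‖z‖ = ‖w‖ := hinj hz hw hnorm
  rw [hzw_norm] at hzw
  exact mul_left_cancel₀ (Complex.ofReal_ne_zero.mpr (hg _ hw).ne') hzw

section RadialProfile

variable {a b r : ℝ}

theorem strictMonoOn_mul_add_div (ha : 0 < a) (hr : 0 ≤ r) (hb : b ≤ a * r ^ 2) :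
    StrictMonoOn (fun s => a * s + b / s) (Ioi r) := by
  intro s (hs : r < s) t (ht : r < t) hst
  have hs0 : 0 < s := hr.trans_lt hs
  have ht0 : 0 < t := hr.trans_lt ht
  have hprod : b < a * (s * t) := hb.trans_lt <|
    mul_lt_mul_of_pos_left (by nlinarith) ha
  have hdiff : a * s + b / s - (a * t + b / t) = (s - t) * (a * (s * t) - b) / (s * t) := by
    field_simp
    ring
  have : (s - t) * (a * (s * t) - b) / (s * t) < 0 :=
    div_neg_of_neg_of_pos (mul_neg_of_neg_of_pos (by linarith) (by linarith)) (by positivity)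
  show a * s + b / s < a * t + b / t
  linarith

theorem add_div_sq_pos (ha : 0 < a) (hr : 0 ≤ r) (hab : 0 ≤ a * r ^ 2 + b) {s : ℝ}
    (hs : r < s) : 0 < a + b / s ^ 2 := by
  have hs0 : 0 < s := hr.trans_lt hs
  have : a * r ^ 2 < a * s ^ 2 := mul_lt_mul_of_pos_left (by nlinarith) ha
  have hnum : 0 < a * s ^ 2 + b := by linarith
  rw [show a + b / s ^ 2 = (a * s ^ 2 + b) / s ^ 2 by field_simp]
  positivity

end RadialProfile

theorem stmt2_general (r ρ : ℝ) (hr : 0 < r) (hr1 : r < 1) (hρ : 0 < ρ)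
    (hn : ρ ≤ 2 * r / (1 + r^2)) :
    Set.InjOn (fun z : ℂ =>
      (((r * ρ - 1) / (r^2 - 1) : ℝ) : ℂ) * z +
      (((r^2 - r * ρ) / (r^2 - 1) : ℝ) : ℂ) * (1 / starRingEnd ℂ z))
      {z : ℂ | r < ‖z‖ ∧ ‖z‖ < 1} := by
  set a : ℝ := (r * ρ - 1) / (r ^ 2 - 1)
  set b : ℝ := (r ^ 2 - r * ρ) / (r ^ 2 - 1)
  have hr2 : r ^ 2 - 1 < 0 := by nlinarith
  have hρr : ρ * (1 + r ^ 2) ≤ 2 * r := (le_div_iff₀ (by positivity)).mp hn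
  have hρ1 : ρ ≤ 1 := hn.trans ((div_le_one (by positivity)).mpr (by nlinarith [sq_nonneg (1 - r)]))
  have ha : 0 < a := div_pos_of_neg_of_neg (by nlinarith) hr2
  have hb : b ≤ a * r ^ 2 := by
    rw [← sub_nonneg, show a * r ^ 2 - b = (r * (ρ * (1 + r ^ 2) - 2 * r)) / (r ^ 2 - 1) by
      field_simp; ring]
    exact div_nonneg_of_nonpos (mul_nonpos_of_nonneg_of_nonpos hr.le (by linarith)) hr2.le
  have hab : a * r ^ 2 + b = r * ρ := by
    have := hr2.ne
    simp only [a, b]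
    field_simp
    ring
  have hradial : (fun z : ℂ => (a : ℂ) * z + (b : ℂ) * (1 / starRingEnd ℂ z)) =
      fun z => ((a + b / ‖z‖ ^ 2 : ℝ) : ℂ) * z := by
    ext z
    rw [Complex.one_div_conj_eq]
    push_cast
    ring
  rw [hradial]
  refine Complex.injOn_ofReal_norm_mul (S := Ioo r 1)
    (fun s hs => add_div_sq_pos ha hr.le (by rw [hab]; positivity) hs.1) ?_
  refine ((strictMonoOn_mul_add_div ha hr.le hb).injOn.mono Ioo_subset_Ioi_self).congr ?_
  intro s hs
  have : s ≠ 0 := (hr.trans hs.1).ne'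
  dsimp only
  field_simp

/-- Each Nitsche map `f(z) = ((rρ-1)/(r²-1)) z + ((r²-rρ)/(r²-1)) (1/z̄)` with
`0 < ρ ≤ 2r/(1+r²) < 1` is injective on the annulus `{r < |z| < 1}`. -/
theorem stmt2 (r ρ : ℝ) (hr : 0 < r) (hr1 : r < 1) (hρ : 0 < ρ)
    (hn : ρ ≤ 2 * r / (1 + r^2)) (hn1 : 2 * r / (1 + r^2) < 1) :
    Set.InjOn (fun z : ℂ =>
      (((r * ρ - 1) / (r^2 - 1) : ℝ) : ℂ) * z +
      (((r^2 - r * ρ) / (r^2 - 1) : ℝ) : ℂ) * (1 / starRingEnd ℂ z))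
      {z : ℂ | r < ‖z‖ ∧ ‖z‖ < 1} :=
  stmt2_general r ρ hr hr1 hρ hn
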